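/- arXiv:1810.10984 — 4 statements merged into one kernel-verified Lean document; each statement's English description precedes it below -/
import Mathlib

section
/- Let R be a d×d real symmetric positive semidefinite matrix with strictly positive diagonal entries, let δ > 0, and set R_RR = R + δI. Let C = Σ⁻¹ R Σ⁻¹ and C_RR = Σ_RR⁻¹ R_RR Σ_RR⁻¹ be the correlation matrices of R and R_RR respectively. Then C_RR(i,i) = 1 for every i, and for every pair i ≠ j with C(i,j) ≠ 0, the absolute value of the off-diagonal correlation strictly decreases: |C_RR(i,j)| < |C(i,j)|. -/
/-!
Adding `δ • 1` leaves the off-diagonal entries of `R` unchanged and strictly increases every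
diagonal entry, so in `C i j = R i j / (√(R i i) * √(R j j))` the numerator stays put while
the denominator strictly increases.
-/

open Matrix

theorem abs_div_sqrt_mul_sqrt_add_lt {a b c δ : ℝ} (ha : 0 < a) (hb : 0 < b) (hc : c ≠ 0)
    (hδ : 0 < δ) : |c / (√(a + δ) * √(b + δ))| < |c / (√a * √b)| := by
  have hsa : √a < √(a + δ) := Real.sqrt_lt_sqrt ha.le (by linarith)
  have hsb : √b < √(b + δ) := Real.sqrt_lt_sqrt hb.le (by linarith)
  rw [abs_div, abs_div, abs_of_nonneg (mul_nonneg (Real.sqrt_nonneg a) (Real.sqrt_nonneg b)),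
    abs_of_nonneg (mul_nonneg (Real.sqrt_nonneg _) (Real.sqrt_nonneg _))]
  exact div_lt_div_of_pos_left (abs_pos.2 hc) (by positivity)
    (mul_lt_mul'' hsa hsb (Real.sqrt_nonneg a) (Real.sqrt_nonneg b))

namespace Matrix

variable {n : Type*} [DecidableEq n]

theorem add_smul_one_apply_self {α : Type*} [Semiring α] (A : Matrix n n α) (δ : α) (i : n) :
    (A + δ • 1) i i = A i i + δ := by
  simp

theorem add_smul_one_apply_of_ne {α : Type*} [Semiring α] (A : Matrix n n α) (δ : α) {i j : n} (hij : i ≠ j) :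
    (A + δ • 1) i j = A i j := by
  simp [one_apply_ne hij]

theorem add_smul_one_apply_self_pos {A : Matrix n n ℝ} (hA : ∀ i, 0 < A i i) {δ : ℝ}
    (hδ : 0 ≤ δ) (i : n) : 0 < (A + δ • 1) i i := by
  rw [add_smul_one_apply_self]
  linarith [hA i]

variable [Fintype n]

theorem inv_diagonal_of_ne_zero {K : Type*} [Field K] {v : n → K} (hv : ∀ i, v i ≠ 0) :
    (diagonal v)⁻¹ = diagonal fun i => (v i)⁻¹ :=
  inv_eq_left_inv <| by
    rw [diagonal_mul_diagonal, ← diagonal_one]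
    exact congrArg diagonal (funext fun i => inv_mul_cancel₀ (hv i))

noncomputable def correlation (A : Matrix n n ℝ) : Matrix n n ℝ :=
  (diagonal fun i => √(A i i))⁻¹ * A * (diagonal fun i => √(A i i))⁻¹

theorem correlation_apply {A : Matrix n n ℝ} (hA : ∀ i, 0 < A i i) (i j : n) :
    correlation A i j = A i j / (√(A i i) * √(A j j)) := by
  rw [correlation, inv_diagonal_of_ne_zero fun i => (Real.sqrt_pos.2 (hA i)).ne',
    mul_diagonal, diagonal_mul]
  field_simp

theorem correlation_apply_self {A : Matrix n n ℝ} (hA : ∀ i, 0 < A i i) (i : n) :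
    correlation A i i = 1 := by
  rw [correlation_apply hA, Real.mul_self_sqrt (hA i).le, div_self (hA i).ne']

theorem correlation_eq_zero_iff {A : Matrix n n ℝ} (hA : ∀ i, 0 < A i i) {i j : n} :
    correlation A i j = 0 ↔ A i j = 0 := by
  rw [correlation_apply hA, div_eq_zero_iff, or_iff_left]
  exact mul_ne_zero (Real.sqrt_pos.2 (hA i)).ne' (Real.sqrt_pos.2 (hA j)).ne'

theorem abs_correlation_add_smul_one_lt {A : Matrix n n ℝ} (hA : ∀ i, 0 < A i i) {δ : ℝ}
    (hδ : 0 < δ) {i j : n} (hij : i ≠ j) (hC : correlation A i j ≠ 0) :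
    |correlation (A + δ • 1) i j| < |correlation A i j| := by
  rw [correlation_apply hA, correlation_apply (add_smul_one_apply_self_pos hA hδ.le),
    add_smul_one_apply_of_ne A δ hij, add_smul_one_apply_self, add_smul_one_apply_self]
  exact abs_div_sqrt_mul_sqrt_add_lt (hA i) (hA j) ((correlation_eq_zero_iff hA).not.1 hC) hδ

end Matrix

theorem ridge_regression_decreases_offdiagonal_correlations_general
    {d : ℕ} (R : Matrix (Fin d) (Fin d) ℝ)
    (hdiag : ∀ i, 0 < R i i) (δ : ℝ) (hδ : 0 < δ)
    (RRR Sg SgRR C CRR : Matrix (Fin d) (Fin d) ℝ)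
    (hRRR : RRR = R + δ • (1 : Matrix (Fin d) (Fin d) ℝ))
    (hSg : Sg = Matrix.diagonal fun i => Real.sqrt (R i i))
    (hSgRR : SgRR = Matrix.diagonal fun i => Real.sqrt (RRR i i))
    (hC : C = Sg⁻¹ * R * Sg⁻¹)
    (hCRR : CRR = SgRR⁻¹ * RRR * SgRR⁻¹) :
    (∀ i, CRR i i = 1) ∧
      (∀ i j, i ≠ j → C i j ≠ 0 → |CRR i j| < |C i j|) := by
  subst hRRR hSg hSgRR
  obtain rfl : C = correlation R := hC
  obtain rfl : CRR = correlation (R + δ • 1) := hCRR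
  exact ⟨correlation_apply_self (add_smul_one_apply_self_pos hdiag hδ.le),
    fun _ _ => abs_correlation_add_smul_one_lt hdiag hδ⟩

/-- ridge regression keeps unit diagonal correlations and strictly
decreases the absolute value of every nonzero off-diagonal correlation. -/
theorem ridge_regression_decreases_offdiagonal_correlations
    {d : ℕ} (R : Matrix (Fin d) (Fin d) ℝ) (hR : R.PosSemidef)
    (hdiag : ∀ i, 0 < R i i) (δ : ℝ) (hδ : 0 < δ)
    (RRR Sg SgRR C CRR : Matrix (Fin d) (Fin d) ℝ)
    (hRRR : RRR = R + δ • (1 : Matrix (Fin d) (Fin d) ℝ))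
    (hSg : Sg = Matrix.diagonal fun i => Real.sqrt (R i i))
    (hSgRR : SgRR = Matrix.diagonal fun i => Real.sqrt (RRR i i))
    (hC : C = Sg⁻¹ * R * Sg⁻¹)
    (hCRR : CRR = SgRR⁻¹ * RRR * SgRR⁻¹) :
    (∀ i, CRR i i = 1) ∧
      (∀ i j, i ≠ j → C i j ≠ 0 → |CRR i j| < |C i j|) :=
  ridge_regression_decreases_offdiagonal_correlations_general R hdiag δ hδ RRR Sg SgRR C CRR hRRR
    hSg hSgRR hC hCRR
end

section
/- Let R be a d×d real symmetric positive semidefinite matrix with eigendecomposition R = V Λ Vᵀ, where V is orthogonal and Λ = diag(λ_1, …, λ_d) with λ_1 ≥ … ≥ λ_d ≥ 0. Let T > λ_d, let Γ be the diagonal matrix with Γ(k,k) = max(T − λ_k, 0), and set R_ME = V(Λ + Γ)Vᵀ. Then for every i, R_ME(i,i) = R(i,i) + Σ_{k=1}^{d} V(i,k)²·Γ(k,k), and the standard deviations satisfy the bounds √R(i,i) ≤ √R_ME(i,i) ≤ √(R(i,i) + T − λ_d). -/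
open Matrix BigOperators

lemma diag_entry_aux {n : Type*} [Fintype n] [DecidableEq n]
    (V : Matrix n n ℝ) (f : n → ℝ) (i : n) :
    (V * Matrix.diagonal f * Vᵀ) i i = ∑ k, (V i k) ^ 2 * f k := by
  rw [Matrix.mul_apply]
  refine Finset.sum_congr rfl fun k _ => ?_
  rw [Matrix.mul_diagonal, Matrix.transpose_apply]; ring

/-- for the minimum eigenvalue method, the diagonal entries satisfy
`R_ME(i,i) = R(i,i) + ∑ₖ V(i,k)² Γ(k,k)` and the standard deviations obey
`√R(i,i) ≤ √R_ME(i,i) ≤ √(R(i,i) + T − λ_d)`. -/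
theorem minimum_eigenvalue_method_variance_update
    {d : ℕ} (R V : Matrix (Fin (d + 1)) (Fin (d + 1)) ℝ)
    (lam : Fin (d + 1) → ℝ) (T : ℝ)
    (hV1 : V * Vᵀ = 1) (hV2 : Vᵀ * V = 1)
    (hdec : Antitone lam) (hnn : 0 ≤ lam (Fin.last d))
    (hR : R = V * Matrix.diagonal lam * Vᵀ)
    (hT : lam (Fin.last d) < T)
    (RME : Matrix (Fin (d + 1)) (Fin (d + 1)) ℝ)
    (hRME : RME = V * (Matrix.diagonal lam
        + Matrix.diagonal fun k => max (T - lam k) 0) * Vᵀ) :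
    (∀ i, RME i i = R i i + ∑ k, (V i k) ^ 2 * max (T - lam k) 0) ∧
      (∀ i, Real.sqrt (R i i) ≤ Real.sqrt (RME i i) ∧
        Real.sqrt (RME i i) ≤ Real.sqrt (R i i + T - lam (Fin.last d))) := by
  have hdiag : ∀ i, RME i i = R i i + ∑ k, (V i k) ^ 2 * max (T - lam k) 0 := by
    intro i
    have : RME = V * Matrix.diagonal lam * Vᵀ
        + V * Matrix.diagonal (fun k => max (T - lam k) 0) * Vᵀ := by
      rw [hRME]; noncomm_ring
    rw [this, ← hR, Matrix.add_apply, diag_entry_aux]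
  refine ⟨hdiag, fun i => ?_⟩
  have hsum1 : ∑ k, (V i k) ^ 2 = 1 := by
    have := congrArg (fun M => M i i) hV1
    simpa [Matrix.mul_apply, Matrix.transpose_apply, sq] using this
  have hnn2 : 0 ≤ ∑ k, (V i k) ^ 2 * max (T - lam k) 0 :=
    Finset.sum_nonneg fun k _ => mul_nonneg (sq_nonneg _) (le_max_right _ _)
  have hub : ∑ k, (V i k) ^ 2 * max (T - lam k) 0 ≤ T - lam (Fin.last d) := by
    calc ∑ k, (V i k) ^ 2 * max (T - lam k) 0
        ≤ ∑ k, (V i k) ^ 2 * (T - lam (Fin.last d)) := by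
          refine Finset.sum_le_sum fun k _ => mul_le_mul_of_nonneg_left ?_ (sq_nonneg _)
          exact max_le (by linarith [hdec (Fin.le_last k)]) (by linarith)
      _ = T - lam (Fin.last d) := by rw [← Finset.sum_mul, hsum1, one_mul]
  constructor
  · exact Real.sqrt_le_sqrt (by rw [hdiag i]; linarith)
  · exact Real.sqrt_le_sqrt (by rw [hdiag i]; linarith)
end

section
/- Let R be a d×d real symmetric positive semidefinite matrix with eigendecomposition R = V Λ Vᵀ, where V is orthogonal and Λ = diag(λ_1, …, λ_d) with λ_1 ≥ … ≥ λ_d ≥ 0 and λ_1 > λ_d. Let κ_max satisfy 1 < κ_max and λ_1 − λ_d·κ_max > 0. Set δ = (λ_1 − λ_d·κ_max)/(κ_max − 1), T = λ_1/κ_max, Γ(k,k) = max(T − λ_k, 0), R_RR = R + δI and R_ME = V(Λ + Γ)Vᵀ. Then for every index i, the reconditioned standard deviations satisfy √(R_ME(i,i)) < √(R_RR(i,i)); that is, for the same target condition number, the minimum eigenvalue method increases every standard deviation strictly less than the ridge regression method. -/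
open Matrix BigOperators

/-!
Both reconditioned matrices are congruences `V * diagonal f * Vᵀ` of diagonal matrices: ridge
regression shifts every eigenvalue by `δ`, the minimum eigenvalue method by
`max (T - λ_k) 0 ≤ T - λ_d < δ`. A diagonal entry of `V * diagonal f * Vᵀ` is the average of `f`
with weights `V i k ^ 2`, which sum to `1` and are not all zero, so it is strictly monotone in `f`.
-/

namespace Matrix

variable {m n α : Type*} [Fintype n]

theorem exists_ne_zero_of_mul_transpose_eq_one [CommSemiring α] [Nontrivial α]
    [DecidableEq m] {V : Matrix m n α} (hV : V * Vᵀ = 1) (i : m) : ∃ k, V i k ≠ 0 := by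
  by_contra! h
  have := congrFun (congrFun hV i) i
  simp [mul_apply, h] at this

variable [DecidableEq n]

theorem mul_diagonal_mul_transpose_apply_self [CommSemiring α]
    (V : Matrix m n α) (f : n → α) (i : m) :
    (V * diagonal f * Vᵀ) i i = ∑ k, V i k * V i k * f k := by
  simp only [mul_apply (M := V * diagonal f), mul_diagonal, transpose_apply]
  exact Finset.sum_congr rfl fun k _ => by ring

theorem mul_diagonal_mul_transpose_add_smul_one [CommSemiring α] [DecidableEq m]
    {V : Matrix m n α} (hV : V * Vᵀ = 1) (f : n → α) (c : α) :
    V * diagonal f * Vᵀ + c • 1 = V * diagonal (fun k => f k + c) * Vᵀ := by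
  rw [← diagonal_add, ← smul_one_eq_diagonal, Matrix.mul_add, Matrix.add_mul, Matrix.mul_smul,
    Matrix.mul_one, Matrix.smul_mul, hV]

variable [CommRing α] [LinearOrder α] [IsStrictOrderedRing α]

theorem mul_diagonal_mul_transpose_apply_self_nonneg (V : Matrix m n α) {f : n → α}
    (hf : ∀ k, 0 ≤ f k) (i : m) : 0 ≤ (V * diagonal f * Vᵀ) i i := by
  rw [mul_diagonal_mul_transpose_apply_self]
  exact Finset.sum_nonneg fun k _ => mul_nonneg (mul_self_nonneg _) (hf k)

theorem mul_diagonal_mul_transpose_apply_self_lt [DecidableEq m] {V : Matrix m n α}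
    (hV : V * Vᵀ = 1) {f g : n → α} (hfg : ∀ k, f k < g k) (i : m) :
    (V * diagonal f * Vᵀ) i i < (V * diagonal g * Vᵀ) i i := by
  obtain ⟨k, hk⟩ := exists_ne_zero_of_mul_transpose_eq_one hV i
  simp only [mul_diagonal_mul_transpose_apply_self]
  exact Finset.sum_lt_sum (fun j _ => mul_le_mul_of_nonneg_left (hfg j).le (mul_self_nonneg _))
    ⟨k, Finset.mem_univ k, mul_lt_mul_of_pos_left (hfg k) (mul_self_pos.mpr hk)⟩

end Matrix

theorem max_div_sub_zero_lt_div_sub_one {K : Type*} [Field K] [LinearOrder K]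
    [IsStrictOrderedRing K] {a b x κ : K} (hκ : 1 < κ) (hab : 0 < a - b * κ)
    (hx : b ≤ x) : max (a / κ - x) 0 < (a - b * κ) / (κ - 1) := by
  have hκ1 : 0 < κ - 1 := by linarith
  refine max_lt ?_ (div_pos hab hκ1)
  calc a / κ - x ≤ a / κ - b := by linarith
    _ = (a - b * κ) / κ := by field_simp
    _ < (a - b * κ) / (κ - 1) := div_lt_div_of_pos_left hab hκ1 (by linarith)

theorem minimum_eigenvalue_std_less_than_ridge_regression_std_general
    {d : ℕ} (R V : Matrix (Fin (d + 1)) (Fin (d + 1)) ℝ)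
    (lam : Fin (d + 1) → ℝ) (κmax δ T : ℝ)
    (hV1 : V * Vᵀ = 1)
    (hdec : Antitone lam) (hnn : 0 ≤ lam (Fin.last d))
    (hR : R = V * Matrix.diagonal lam * Vᵀ)
    (hκ : 1 < κmax) (hnum : 0 < lam 0 - lam (Fin.last d) * κmax)
    (hδ : δ = (lam 0 - lam (Fin.last d) * κmax) / (κmax - 1))
    (hT : T = lam 0 / κmax)
    (RRR RME : Matrix (Fin (d + 1)) (Fin (d + 1)) ℝ)
    (hRRR : RRR = R + δ • (1 : Matrix (Fin (d + 1)) (Fin (d + 1)) ℝ))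
    (hRME : RME = V * (Matrix.diagonal lam
        + Matrix.diagonal fun k => max (T - lam k) 0) * Vᵀ) :
    ∀ i, Real.sqrt (RME i i) < Real.sqrt (RRR i i) := by
  intro i
  have hlast : ∀ k, lam (Fin.last d) ≤ lam k := fun k => hdec (Fin.le_last k)
  rw [hRME, diagonal_add, hRRR, hR, mul_diagonal_mul_transpose_add_smul_one hV1]
  refine Real.sqrt_lt_sqrt
    (mul_diagonal_mul_transpose_apply_self_nonneg V
      (fun k => add_nonneg (hnn.trans (hlast k)) (le_max_right _ _)) i)
    (mul_diagonal_mul_transpose_apply_self_lt hV1 (fun k => ?_) i)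
  rw [hT, hδ]
  exact add_lt_add_right (max_div_sub_zero_lt_div_sub_one hκ hnum (hlast k)) _

/-- for the same target condition number `κ_max`, the minimum eigenvalue
method increases every standard deviation strictly less than ridge regression:
`√R_ME(i,i) < √R_RR(i,i)` for every index `i`. -/
theorem minimum_eigenvalue_std_less_than_ridge_regression_std
    {d : ℕ} (R V : Matrix (Fin (d + 1)) (Fin (d + 1)) ℝ)
    (lam : Fin (d + 1) → ℝ) (κmax δ T : ℝ)
    (hV1 : V * Vᵀ = 1) (hV2 : Vᵀ * V = 1)
    (hdec : Antitone lam) (hnn : 0 ≤ lam (Fin.last d))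
    (hgt : lam (Fin.last d) < lam 0)
    (hR : R = V * Matrix.diagonal lam * Vᵀ)
    (hκ : 1 < κmax) (hnum : 0 < lam 0 - lam (Fin.last d) * κmax)
    (hδ : δ = (lam 0 - lam (Fin.last d) * κmax) / (κmax - 1))
    (hT : T = lam 0 / κmax)
    (RRR RME : Matrix (Fin (d + 1)) (Fin (d + 1)) ℝ)
    (hRRR : RRR = R + δ • (1 : Matrix (Fin (d + 1)) (Fin (d + 1)) ℝ))
    (hRME : RME = V * (Matrix.diagonal lam
        + Matrix.diagonal fun k => max (T - lam k) 0) * Vᵀ) :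
    ∀ i, Real.sqrt (RME i i) < Real.sqrt (RRR i i) :=
  minimum_eigenvalue_std_less_than_ridge_regression_std_general R V lam κmax δ T hV1 hdec hnn hR hκ
    hnum hδ hT RRR RME hRRR hRME
end

section
/- Let R be a d×d real symmetric positive definite matrix with eigendecomposition R = V Λ Vᵀ (V orthogonal, eigenvalues λ_1 ≥ … ≥ λ_d > 0), let T > 0, and set R_ME = V(Λ + Γ)Vᵀ with Γ(k,k) = max(T − λ_k, 0). Then for every vector z ∈ ℝᵈ, zᵀR_ME⁻¹z ≤ zᵀR⁻¹z; consequently the observation term of the 3D-Var objective function, and hence the full objective function J_ME, is pointwise less than or equal to the original objective function J when the minimum eigenvalue method is applied to R. -/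
open Matrix BigOperators

lemma me_inv_form {d : ℕ} (V : Matrix (Fin d) (Fin d) ℝ)
    (hV1 : V * Vᵀ = 1) (hV2 : Vᵀ * V = 1) (f : Fin d → ℝ) (hf : ∀ i, f i ≠ 0) :
    (V * Matrix.diagonal f * Vᵀ)⁻¹ = V * Matrix.diagonal (fun i => (f i)⁻¹) * Vᵀ := by
  apply Matrix.inv_eq_right_inv
  calc V * Matrix.diagonal f * Vᵀ * (V * Matrix.diagonal (fun i => (f i)⁻¹) * Vᵀ)
      = V * Matrix.diagonal f * (Vᵀ * V) * Matrix.diagonal (fun i => (f i)⁻¹) * Vᵀ := by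
        simp only [Matrix.mul_assoc]
    _ = V * (Matrix.diagonal f * Matrix.diagonal (fun i => (f i)⁻¹)) * Vᵀ := by
        rw [hV2, Matrix.mul_one]; simp only [Matrix.mul_assoc]
    _ = 1 := by
        rw [Matrix.diagonal_mul_diagonal]
        have : (fun i => f i * (f i)⁻¹) = fun _ : Fin d => (1:ℝ) := by
          funext i; exact mul_inv_cancel₀ (hf i)
        rw [this, Matrix.diagonal_one, Matrix.mul_one, hV1]

lemma me_quad_form {d : ℕ} (V : Matrix (Fin d) (Fin d) ℝ)
    (f : Fin d → ℝ) (z : Fin d → ℝ) :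
    z ⬝ᵥ (V * Matrix.diagonal f * Vᵀ).mulVec z
      = ∑ i, f i * (Vᵀ.mulVec z i)^2 := by
  rw [← Matrix.mulVec_mulVec, ← Matrix.mulVec_mulVec, Matrix.dotProduct_mulVec,
    ← Matrix.mulVec_transpose]
  simp only [dotProduct, Matrix.mulVec_diagonal, pow_two]
  exact Finset.sum_congr rfl fun i _ => by ring

/-- the minimum eigenvalue method decreases the observation quadratic
form pointwise, `zᵀR_ME⁻¹z ≤ zᵀR⁻¹z`, and hence the objective function `J_ME` is
pointwise at most the original objective function `J`. -/
theorem minimum_eigenvalue_decreases_objective_function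
    {n d : ℕ} (R V : Matrix (Fin d) (Fin d) ℝ) (lam : Fin d → ℝ)
    (hV1 : V * Vᵀ = 1) (hV2 : Vᵀ * V = 1)
    (hdec : Antitone lam) (hpos : ∀ i, 0 < lam i)
    (hR : R = V * Matrix.diagonal lam * Vᵀ)
    (T : ℝ) (hT : 0 < T)
    (RME : Matrix (Fin d) (Fin d) ℝ)
    (hRME : RME = V * (Matrix.diagonal lam
        + Matrix.diagonal fun k => max (T - lam k) 0) * Vᵀ)
    (B : Matrix (Fin n) (Fin n) ℝ) (hB : IsUnit B.det)
    (xb : Fin n → ℝ) (y : Fin d → ℝ) (h : (Fin n → ℝ) → Fin d → ℝ)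
    (J JME : (Fin n → ℝ) → ℝ)
    (hJ : J = fun x => (1 / 2) * ((x - xb) ⬝ᵥ B⁻¹.mulVec (x - xb))
        + (1 / 2) * ((y - h x) ⬝ᵥ R⁻¹.mulVec (y - h x)))
    (hJME : JME = fun x => (1 / 2) * ((x - xb) ⬝ᵥ B⁻¹.mulVec (x - xb))
        + (1 / 2) * ((y - h x) ⬝ᵥ RME⁻¹.mulVec (y - h x))) :
    (∀ z : Fin d → ℝ, z ⬝ᵥ RME⁻¹.mulVec z ≤ z ⬝ᵥ R⁻¹.mulVec z) ∧
      ∀ x, JME x ≤ J x := by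
  set g : Fin d → ℝ := fun k => lam k + max (T - lam k) 0 with hg
  have hgpos : ∀ i, 0 < g i := fun i =>
    add_pos_of_pos_of_nonneg (hpos i) (le_max_right _ _)
  have hRME' : RME = V * Matrix.diagonal g * Vᵀ := by
    rw [hRME, Matrix.diagonal_add]
  have hRinv : R⁻¹ = V * Matrix.diagonal (fun i => (lam i)⁻¹) * Vᵀ := by
    rw [hR]; exact me_inv_form V hV1 hV2 lam (fun i => (hpos i).ne')
  have hRMEinv : RME⁻¹ = V * Matrix.diagonal (fun i => (g i)⁻¹) * Vᵀ := by
    rw [hRME']; exact me_inv_form V hV1 hV2 g (fun i => (hgpos i).ne')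
  have key : ∀ z : Fin d → ℝ, z ⬝ᵥ RME⁻¹.mulVec z ≤ z ⬝ᵥ R⁻¹.mulVec z := by
    intro z
    rw [hRinv, hRMEinv, me_quad_form, me_quad_form]
    apply Finset.sum_le_sum
    intro i _
    apply mul_le_mul_of_nonneg_right _ (sq_nonneg _)
    apply inv_anti₀ (hpos i)
    exact le_add_of_nonneg_right (le_max_right _ _)
  refine ⟨key, fun x => ?_⟩
  rw [hJ, hJME]
  dsimp only
  have := key (y - h x)
  nlinarith [this]
end
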